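/- Let q be a prime power. Suppose that for all integers k, v1, v2 with k ≥ 3 and v1 ≥ v2 + 2 ≥ k + 1 it holds that B_q(v1, v2, 2k−2; k) = A_q(v2, 2k−4; k−1). Then for all integers v, k with k ≥ 3 and v ≥ 2k, A_q(v, 2k−2; k) ≥ q^{2(v−k)} + A_q(v−k, 2k−4; k−1). -/

import Mathlib

/-- The subspace distance between two subspaces:
`d_s(U,W) = dim(U+W) - dim(U∩W)`. -/
noncomputable def subspaceDist {F V : Type*} [Field F] [AddCommGroup V] [Module F V]
    (U W : Submodule F V) : ℕ :=
  Module.finrank F ↥(U ⊔ W) - Module.finrank F ↥(U ⊓ W)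

/-- `C` is a constant dimension code of `k`-spaces in `F^v` with minimum
subspace distance at least `d`. -/
def IsCDCode (F : Type*) [Field F] (v k d : ℕ)
    (C : Finset (Submodule F (Fin v → F))) : Prop :=
  (∀ U ∈ C, Module.finrank F ↥U = k) ∧
  (∀ U ∈ C, ∀ U' ∈ C, U ≠ U' → d ≤ subspaceDist U U')

/-- `A_q(v,d;k)`: the maximum cardinality of a constant dimension code of
`k`-spaces in `F^v` with minimum subspace distance at least `d`. -/
noncomputable def Aq (F : Type*) [Field F] (v d k : ℕ) : ℕ :=
  sSup {n | ∃ C : Finset (Submodule F (Fin v → F)), C.card = n ∧ IsCDCode F v k d C}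

/-- `B_q(v1,v2,d;k)`: the maximum cardinality of a constant dimension code of
`k`-spaces in `F^{v1}` with minimum subspace distance at least `d` such that some
`v2`-space `W` intersects every codeword in dimension at least `d/2`. -/
noncomputable def Bq (F : Type*) [Field F] (v1 v2 d k : ℕ) : ℕ :=
  sSup {n | ∃ (C : Finset (Submodule F (Fin v1 → F))) (W : Submodule F (Fin v1 → F)),
    C.card = n ∧ IsCDCode F v1 k d C ∧ Module.finrank F ↥W = v2 ∧
    (∀ U ∈ C, d / 2 ≤ Module.finrank F ↥(U ⊓ W))}

/-- The Gaussian binomial coefficient `[a choose b]_q`. -/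
noncomputable def gaussBinom (q : ℚ) (a b : ℕ) : ℚ :=
  ∏ i ∈ Finset.range b, (q ^ (a - b + i + 1) - 1) / (q ^ (i + 1) - 1)

/-- The row space of the matrix `(I_k | A)`, viewed as a subspace of `F^v`. -/
noncomputable def rowSpanAug (F : Type*) [Field F] (k v : ℕ) (h : k ≤ v)
    (A : Matrix (Fin k) (Fin (v - k)) F) : Submodule F (Fin v → F) :=
  Submodule.span F (Set.range fun i : Fin k =>
    Fin.append ((1 : Matrix (Fin k) (Fin k) F) i) (A i) ∘ Fin.cast (Nat.add_sub_cancel' h).symm)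

/-!
Take an optimal code `D` realising `B_q(v, v-k, 2k-2; k)`, with its `(v-k)`-space `W`, and a
complement `W'` of `W`. The graph of a linear map `W' → W` meets `W` trivially, hence meets every
codeword of `D` (which meets `W` in dimension `≥ k-1`) in dimension `≤ 1`, and two such graphs
meet in a copy of the kernel of the difference of the maps. Identifying `W` with `𝔽_{q^(v-k)}`,
the `q^(2(v-k))` maps `x ↦ a x + b x^q` restricted to `W'` differ pairwise by maps of the same
shape, whose kernels have at most `q` elements, i.e. dimension `≤ 1`. Their graphs extend `D`
to a code of size `q^(2(v-k)) + B_q(v, v-k, 2k-2; k)`, and the hypothesis identifies the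
second summand with `A_q(v-k, 2k-4; k-1)`.
-/

open Module Polynomial

theorem ncard_setOf_mul_add_mul_pow_eq_zero_le {K : Type*} [Field K] {n : ℕ} (hn : 1 < n)
    {a b : K} (hab : a ≠ 0 ∨ b ≠ 0) : {x : K | a * x + b * x ^ n = 0}.ncard ≤ n := by
  classical
  set p : K[X] := C a * X + C b * X ^ n
  have hp : p ≠ 0 := by
    intro h
    rcases hab with ha | hb
    · exact ha (by simpa [p, hn.ne] using congrArg (coeff · 1) h)
    · exact hb (by simpa [p, coeff_X, hn.ne] using congrArg (coeff · n) h)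
  have hsub : {x : K | a * x + b * x ^ n = 0} ⊆ p.roots.toFinset := fun x hx => by
    simpa [p, hp] using hx
  calc {x : K | a * x + b * x ^ n = 0}.ncard ≤ p.roots.toFinset.card := by
        simpa using Set.ncard_le_ncard hsub (Finset.finite_toSet _)
    _ ≤ p.natDegree := (Multiset.toFinset_card_le _).trans p.card_roots'
    _ ≤ n := by simp only [p]; compute_degree; omega

theorem finrank_le_one_of_natCard_le {F V : Type*} [Field F] [Fintype F] [AddCommGroup V]
    [Module F V] [Module.Finite F V] (h : Nat.card V ≤ Fintype.card F) : finrank F V ≤ 1 := by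
  rw [Module.natCard_eq_pow_finrank (K := F), Nat.card_eq_fintype_card] at h
  exact (Nat.pow_le_pow_iff_right Fintype.one_lt_card).mp (by simpa using h)

section Linearized

variable {F K : Type*} [Field F] [Fintype F] [Field K] [Algebra F K]

variable (F) in
noncomputable def linearizedBinomial (a b : K) : K →ₗ[F] K :=
  LinearMap.mulLeft F a + LinearMap.mulLeft F b ∘ₗ (FiniteField.frobeniusAlgHom F K).toLinearMap

theorem linearizedBinomial_apply (a b x : K) :
    linearizedBinomial F a b x = a * x + b * x ^ Fintype.card F := rfl

theorem linearizedBinomial_sub (a b a' b' : K) :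
    linearizedBinomial F a b - linearizedBinomial F a' b' =
      linearizedBinomial F (a - a') (b - b') := by
  ext x
  simp only [LinearMap.sub_apply, linearizedBinomial_apply]
  ring

theorem finrank_ker_linearizedBinomial_comp_le_one [Finite K] {E : Type*} [AddCommGroup E]
    [Module F E] [Module.Finite F E] {ι : E →ₗ[F] K} (hι : Function.Injective ι) {a b : K}
    (hab : a ≠ 0 ∨ b ≠ 0) : finrank F (LinearMap.ker (linearizedBinomial F a b ∘ₗ ι)) ≤ 1 := by
  refine finrank_le_one_of_natCard_le ?_
  calc Nat.card (LinearMap.ker (linearizedBinomial F a b ∘ₗ ι))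
      ≤ Nat.card {x : K | a * x + b * x ^ Fintype.card F = 0} :=
        Nat.card_le_card_of_injective (fun x => ⟨ι x, x.2⟩)
          fun x y h => Subtype.ext (hι (congrArg Subtype.val h))
    _ ≤ Fintype.card F := by
        rw [Nat.card_coe_set_eq]
        exact ncard_setOf_mul_add_mul_pow_eq_zero_le Fintype.one_lt_card hab

end Linearized

theorem exists_finset_linearMap_finrank_ker_sub_le_one {F E E' : Type*} [Field F] [Fintype F]
    [AddCommGroup E] [Module F E] [Module.Finite F E] [AddCommGroup E'] [Module F E']
    [Module.Finite F E'] (hE : 2 ≤ finrank F E) (hEE' : finrank F E ≤ finrank F E') :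
    ∃ S : Finset (E →ₗ[F] E'), S.card = Fintype.card F ^ (2 * finrank F E') ∧
      ∀ f ∈ S, ∀ g ∈ S, f ≠ g → finrank F (LinearMap.ker (f - g)) ≤ 1 := by
  classical
  set m := finrank F E'
  have : NeZero m := ⟨by omega⟩
  have : Fact (ringChar F).Prime := ⟨CharP.char_is_prime F _⟩
  let K := FiniteField.Extension F (ringChar F) m
  have : Fintype K := Fintype.ofFinite K
  have hK : finrank F K = m := FiniteField.finrank_extension F _ m
  obtain ⟨ι, hι⟩ :=
    (finrank_le_iff_exists_linearMap (R := F) (M := E) (M' := K)).mp (hK.symm ▸ hEE')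
  let π : K ≃ₗ[F] E' := LinearEquiv.ofFinrankEq K E' hK
  let Φ (ab : K × K) : E →ₗ[F] E' := π.toLinearMap ∘ₗ linearizedBinomial F ab.1 ab.2 ∘ₗ ι
  have hΦ_sub (ab ab' : K × K) : Φ ab - Φ ab' = Φ (ab - ab') := by
    simp only [Φ, ← LinearMap.comp_sub, ← LinearMap.sub_comp, linearizedBinomial_sub,
      Prod.fst_sub, Prod.snd_sub]
  have hΦ_ker (ab : K × K) (hab : ab ≠ 0) : finrank F (LinearMap.ker (Φ ab)) ≤ 1 := by
    rw [LinearEquiv.ker_comp]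
    refine finrank_ker_linearizedBinomial_comp_le_one hι ?_
    by_contra! h
    exact hab (Prod.ext h.1 h.2)
  have hΦ : Function.Injective Φ := by
    intro ab ab' h
    by_contra hne
    have := hΦ_ker (ab - ab') (sub_ne_zero.mpr hne)
    rw [← hΦ_sub, h, sub_self, LinearMap.ker_zero, finrank_top] at this
    omega
  refine ⟨Finset.univ.image Φ, ?_, ?_⟩
  · rw [Finset.card_image_of_injective _ hΦ, Finset.card_univ, Fintype.card_eq_nat_card,
      Nat.card_prod, FiniteField.natCard_extension, Nat.card_eq_fintype_card, ← pow_add]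
    ring_nf
  · simp only [Finset.mem_image, Finset.mem_univ, true_and]
    rintro _ ⟨ab, rfl⟩ _ ⟨ab', rfl⟩ hne
    rw [hΦ_sub]
    exact hΦ_ker _ (sub_ne_zero.mpr (ne_of_apply_ne Φ hne))

section Graph

variable {F V : Type*} [Field F] [AddCommGroup V] [Module F V] {W W' : Submodule F V}

noncomputable def graphMap (W W' : Submodule F V) (f : W' →ₗ[F] W) : W' →ₗ[F] V :=
  W'.subtype + W.subtype ∘ₗ f

theorem graphMap_apply (f : W' →ₗ[F] W) (x : W') : graphMap W W' f x = x + f x := rfl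

noncomputable def graphSubmodule (W W' : Submodule F V) (f : W' →ₗ[F] W) : Submodule F V :=
  LinearMap.range (graphMap W W' f)

variable (hWW' : Disjoint W W')
include hWW'

theorem graphMap_eq_graphMap_iff (f g : W' →ₗ[F] W) (x y : W') :
    graphMap W W' f x = graphMap W W' g y ↔ x = y ∧ f x = g x := by
  constructor
  · intro h
    rw [graphMap_apply, graphMap_apply] at h
    have hxy : (x : V) - y = (g y : V) - f x := by rw [sub_eq_sub_iff_add_eq_add, h, add_comm]
    have : (x : V) - y = 0 := Submodule.disjoint_def.mp hWW' _
      (hxy ▸ sub_mem (g y).2 (f x).2) (sub_mem x.2 y.2)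
    obtain rfl : x = y := Subtype.ext (sub_eq_zero.mp this)
    exact ⟨rfl, Subtype.ext (add_left_cancel h)⟩
  · rintro ⟨rfl, h⟩
    rw [graphMap_apply, graphMap_apply, h]

theorem graphMap_injective (f : W' →ₗ[F] W) : Function.Injective (graphMap W W' f) :=
  fun x y h => ((graphMap_eq_graphMap_iff hWW' f f x y).mp h).1

theorem finrank_graphSubmodule (f : W' →ₗ[F] W) :
    finrank F (graphSubmodule W W' f) = finrank F W' :=
  LinearMap.finrank_range_of_inj (graphMap_injective hWW' f)

theorem graphSubmodule_inf_eq_bot (f : W' →ₗ[F] W) : graphSubmodule W W' f ⊓ W = ⊥ := by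
  rw [eq_bot_iff]
  rintro _ ⟨⟨x, rfl⟩, hxW⟩
  have hx : (x : V) ∈ W := by
    simpa [graphMap_apply] using sub_mem hxW (f x).2
  obtain rfl : x = 0 := Subtype.ext (Submodule.disjoint_def.mp hWW' _ hx x.2)
  exact (graphMap W W' f).map_zero

theorem finrank_graphSubmodule_inf_le [FiniteDimensional F W'] (f g : W' →ₗ[F] W) :
    finrank F ↥(graphSubmodule W W' f ⊓ graphSubmodule W W' g) ≤
      finrank F (LinearMap.ker (f - g)) := by
  have hle : graphSubmodule W W' f ⊓ graphSubmodule W W' g ≤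
      (LinearMap.ker (f - g)).map (graphMap W W' f) := by
    rintro _ ⟨⟨x, rfl⟩, ⟨y, hy⟩⟩
    obtain ⟨rfl, hfg⟩ := (graphMap_eq_graphMap_iff hWW' f g x y).mp hy.symm
    exact Submodule.mem_map_of_mem (by simp [hfg])
  exact (Submodule.finrank_mono hle).trans (Submodule.finrank_map_le _ _)

end Graph

section Codes

variable {F : Type*} [Field F]

theorem isCDCode_two_mul_sub_two_iff {v k : ℕ} {C : Finset (Submodule F (Fin v → F))} :
    IsCDCode F v k (2 * k - 2) C ↔ (∀ U ∈ C, finrank F U = k) ∧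
      ∀ U ∈ C, ∀ U' ∈ C, U ≠ U' → finrank F ↥(U ⊓ U') ≤ 1 := by
  refine and_congr_right fun hC => forall₂_congr fun U hU => forall₂_congr fun U' hU' =>
    imp_congr_right fun _ => ?_
  have hsum := Submodule.finrank_sup_add_finrank_inf_eq U U'
  have hle := Submodule.finrank_mono (inf_le_left : U ⊓ U' ≤ U)
  rw [hC U hU, hC U' hU'] at hsum
  rw [hC U hU] at hle
  unfold subspaceDist
  omega

theorem finrank_inf_add_finrank_inf_le {V : Type*} [AddCommGroup V] [Module F V]
    [FiniteDimensional F V] {U U' W : Submodule F V} (hUW : U ⊓ W = ⊥) :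
    finrank F ↥(U ⊓ U') + finrank F ↥(U' ⊓ W) ≤ finrank F U' := by
  have hinf : (U ⊓ U') ⊓ (U' ⊓ W) = ⊥ :=
    eq_bot_iff.mpr (hUW ▸ le_inf (inf_le_left.trans inf_le_left) (inf_le_right.trans inf_le_right))
  have hsum := Submodule.finrank_sup_add_finrank_inf_eq (U ⊓ U') (U' ⊓ W)
  rw [hinf, finrank_bot, add_zero] at hsum
  exact hsum ▸ Submodule.finrank_mono (sup_le inf_le_right inf_le_left)

theorem isCDCode_union {v k : ℕ} {D T : Finset (Submodule F (Fin v → F))}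
    {W : Submodule F (Fin v → F)} (hD : IsCDCode F v k (2 * k - 2) D)
    (hDW : ∀ U ∈ D, k - 1 ≤ finrank F ↥(U ⊓ W)) (hT : IsCDCode F v k (2 * k - 2) T)
    (hTW : ∀ U ∈ T, U ⊓ W = ⊥) : IsCDCode F v k (2 * k - 2) (D ∪ T) := by
  rw [isCDCode_two_mul_sub_two_iff] at hD hT ⊢
  have hmixed : ∀ U ∈ T, ∀ U' ∈ D, finrank F ↥(U ⊓ U') ≤ 1 := fun U hU U' hU' => by
    have := finrank_inf_add_finrank_inf_le (U' := U') (hTW U hU)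
    have := hDW U' hU'
    have := hD.1 U' hU'
    omega
  refine ⟨fun U hU => (Finset.mem_union.mp hU).elim (hD.1 U) (hT.1 U), ?_⟩
  intro U hU U' hU' hne
  rcases Finset.mem_union.mp hU with hU | hU <;> rcases Finset.mem_union.mp hU' with hU' | hU'
  · exact hD.2 U hU U' hU' hne
  · exact inf_comm U U' ▸ hmixed U' hU' U hU
  · exact hmixed U hU U' hU'
  · exact hT.2 U hU U' hU' hne

variable [Fintype F]

theorem card_le_Aq {v d k : ℕ} {C : Finset (Submodule F (Fin v → F))} (hC : IsCDCode F v k d C) :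
    C.card ≤ Aq F v d k := by
  have : Fintype (Submodule F (Fin v → F)) := Fintype.ofFinite _
  refine le_csSup ⟨Fintype.card (Submodule F (Fin v → F)), ?_⟩ ⟨C, rfl, hC⟩
  rintro _ ⟨C', rfl, -⟩
  exact C'.card_le_univ

theorem exists_card_eq_Bq {v1 v2 : ℕ} (d k : ℕ) (h : v2 ≤ v1) :
    ∃ (C : Finset (Submodule F (Fin v1 → F))) (W : Submodule F (Fin v1 → F)),
      C.card = Bq F v1 v2 d k ∧ IsCDCode F v1 k d C ∧ finrank F W = v2 ∧
      ∀ U ∈ C, d / 2 ≤ finrank F ↥(U ⊓ W) := by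
  have : Fintype (Submodule F (Fin v1 → F)) := Fintype.ofFinite _
  obtain ⟨f, hf⟩ := (finrank_le_iff_exists_linearMap (R := F) (M := Fin v2 → F)
    (M' := Fin v1 → F)).mp (by simpa using h)
  let S : Set ℕ := {n | ∃ (C : Finset (Submodule F (Fin v1 → F))) (W : Submodule F (Fin v1 → F)),
    C.card = n ∧ IsCDCode F v1 k d C ∧ finrank F W = v2 ∧ ∀ U ∈ C, d / 2 ≤ finrank F ↥(U ⊓ W)}
  show sSup S ∈ S
  refine Nat.sSup_mem ⟨0, ∅, LinearMap.range f, rfl, ⟨by simp, by simp⟩, ?_, by simp⟩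
    ⟨Fintype.card (Submodule F (Fin v1 → F)), ?_⟩
  · rw [LinearMap.finrank_range_of_inj hf, finrank_fin_fun]
  · rintro _ ⟨C, W, rfl, -⟩
    exact C.card_le_univ

theorem exists_isCDCode_inf_eq_bot {v : ℕ} {W W' : Submodule F (Fin v → F)}
    (hWW' : Disjoint W W') (hW' : 2 ≤ finrank F W') (hW'W : finrank F W' ≤ finrank F W) :
    ∃ T : Finset (Submodule F (Fin v → F)), T.card = Fintype.card F ^ (2 * finrank F W) ∧
      IsCDCode F v (finrank F W') (2 * finrank F W' - 2) T ∧ ∀ U ∈ T, U ⊓ W = ⊥ := by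
  obtain ⟨S, hScard, hS⟩ := exists_finset_linearMap_finrank_ker_sub_le_one hW' hW'W
  have hinf : ∀ f ∈ S, ∀ g ∈ S, f ≠ g →
      finrank F ↥(graphSubmodule W W' f ⊓ graphSubmodule W W' g) ≤ 1 := fun f hf g hg hfg =>
    (finrank_graphSubmodule_inf_le hWW' f g).trans (hS f hf g hg hfg)
  have hinj : Set.InjOn (graphSubmodule W W') S := fun f hf g hg hfg => by
    by_contra hne
    have := hinf f hf g hg hne
    rw [hfg, inf_idem, finrank_graphSubmodule hWW'] at this
    omega
  refine ⟨S.image (graphSubmodule W W'), by rw [Finset.card_image_of_injOn hinj, hScard], ?_, ?_⟩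
  · rw [isCDCode_two_mul_sub_two_iff]
    simp only [Finset.forall_mem_image]
    exact ⟨fun f _ => finrank_graphSubmodule hWW' f,
      fun f hf g hg hne => hinf f hf g hg (ne_of_apply_ne _ hne)⟩
  · simp only [Finset.forall_mem_image]
    exact fun f _ => graphSubmodule_inf_eq_bot hWW' f

end Codes

/-- assuming Conjecture 1 of the paper,
`A_q(v,2k-2;k) ≥ q^{2(v-k)} + A_q(v-k,2k-4;k-1)` for `k ≥ 3` (Corollary A.2 (a)). -/
theorem stmt_18 (q : ℕ) (F : Type) [Field F] [Fintype F] (hq : Fintype.card F = q)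
    (hconj : ∀ k v1 v2 : ℕ, 3 ≤ k → k + 1 ≤ v2 + 2 → v2 + 2 ≤ v1 →
      Bq F v1 v2 (2 * k - 2) k = Aq F v2 (2 * k - 4) (k - 1))
    (v k : ℕ) (hk : 3 ≤ k) (hkv : 2 * k ≤ v) :
    q ^ (2 * (v - k)) + Aq F (v - k) (2 * k - 4) (k - 1) ≤ Aq F v (2 * k - 2) k := by
  subst hq
  obtain ⟨D, W, hDcard, hD, hW, hDW⟩ := exists_card_eq_Bq (F := F) (v1 := v) (v2 := v - k)
    (2 * k - 2) k (by omega)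
  rw [hconj k v (v - k) hk (by omega) (by omega)] at hDcard
  obtain ⟨W', hWW'⟩ := Submodule.exists_isCompl W
  have hW' : finrank F W' = k := by
    have := Submodule.finrank_add_eq_of_isCompl hWW'
    rw [finrank_fin_fun] at this
    omega
  obtain ⟨T, hTcard, hT, hTW⟩ := exists_isCDCode_inf_eq_bot hWW'.disjoint (by omega) (by omega)
  rw [hW] at hTcard
  rw [hW'] at hT
  have hDT : Disjoint D T := Finset.disjoint_left.mpr fun U hUD hUT => by
    have := hDW U hUD
    rw [hTW U hUT, finrank_bot] at this
    omega
  calc Fintype.card F ^ (2 * (v - k)) + Aq F (v - k) (2 * k - 4) (k - 1)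
      = (D ∪ T).card := by rw [Finset.card_union_of_disjoint hDT, hDcard, hTcard, add_comm]
    _ ≤ Aq F v (2 * k - 2) k :=
        card_le_Aq (isCDCode_union hD (fun U hU => by have := hDW U hU; omega) hT hTW)
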